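/- arXiv:math/0303148 — 5 statements merged into one kernel-verified Lean document; each statement's English description precedes it below -/
import Mathlib

section
/- (Local strong factorization in dimension 2.) Let σ and τ be two-dimensional nonsingular cones in Z^2 with τ ⊆ σ. Then τ can be obtained from σ by a finite sequence of star subdivisions: there is a sequence σ = σ_0, σ_1, ..., σ_k = τ where each σ_{m+1} is one of the two cones in the star subdivision of σ_m at the sum of its two minimal generators. -/
/-- The real vector obtained from an integer vector. -/
def toReal {n : ℕ} (w : Fin n → ℤ) : Fin n → ℝ := fun j => (w j : ℝ)

/-- The cone of nonnegative real combinations of the integer vectors `w i`. -/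
def realCone {n m : ℕ} (w : Fin m → Fin n → ℤ) : Set (Fin n → ℝ) :=
  {x | ∃ c : Fin m → ℝ, (∀ i, 0 ≤ c i) ∧ x = ∑ i, c i • toReal (w i)}

/-- `w` is a `ℤ`-basis of the lattice `ℤ^n`. -/
def IsZBasis {n : ℕ} (w : Fin n → Fin n → ℤ) : Prop := IsUnit (Matrix.of w).det

/-- One step of star subdivision along the vector `v`: replace some generator `w j`
by `w i + w j` (i.e. pass to the cone of the star subdivision at `w i + w j`
omitting `w j`), where the resulting cone must contain `v`. -/
def StarStep {n : ℕ} (v : Fin n → ℝ) (w w' : Fin n → Fin n → ℤ) : Prop :=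
  ∃ i j : Fin n, i ≠ j ∧ w' = Function.update w j (w i + w j) ∧ v ∈ realCone w'

/-- One step of star subdivision (no valuation): replace a generator `w j` by `w i + w j`,
i.e. pass to one of the two cones of the star subdivision at the sum of generators. -/
def Step {n : ℕ} (w w' : Fin n → Fin n → ℤ) : Prop :=
  ∃ i j : Fin n, i ≠ j ∧ w' = Function.update w j (w i + w j)

lemma mem2 {v : Fin 2 → Fin 2 → ℤ} {x : Fin 2 → ℝ} :
    x ∈ realCone v ↔ ∃ c0 c1 : ℝ, 0 ≤ c0 ∧ 0 ≤ c1 ∧ ∀ j, x j = c0 * v 0 j + c1 * v 1 j := by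
  constructor
  · rintro ⟨c, hc, rfl⟩
    exact ⟨c 0, c 1, hc 0, hc 1, fun j => by simp [Fin.sum_univ_two, toReal]⟩
  · rintro ⟨c0, c1, h0, h1, hx⟩
    refine ⟨![c0, c1], fun i => by fin_cases i <;> assumption, ?_⟩
    funext j
    simp [Fin.sum_univ_two, toReal, hx j]

lemma gen_mem (v : Fin 2 → Fin 2 → ℤ) (i : Fin 2) : toReal (v i) ∈ realCone v := by
  rw [mem2]
  fin_cases i
  · exact ⟨1, 0, zero_le_one, le_refl 0, fun j => by simp [toReal]⟩
  · exact ⟨0, 1, le_refl 0, zero_le_one, fun j => by simp [toReal]⟩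

lemma subset2 {u w : Fin 2 → Fin 2 → ℤ} (h0 : toReal (u 0) ∈ realCone w)
    (h1 : toReal (u 1) ∈ realCone w) : realCone u ⊆ realCone w := by
  intro x hx
  rw [mem2] at h0 h1 hx ⊢
  obtain ⟨c0, c1, hc0, hc1, hc⟩ := hx
  obtain ⟨d0, d1, hd0, hd1, hd⟩ := h0
  obtain ⟨e0, e1, he0, he1, he⟩ := h1
  refine ⟨c0 * d0 + c1 * e0, c0 * d1 + c1 * e1, by positivity, by positivity, fun j => ?_⟩
  have hdj := hd j; have hej := he j
  simp only [toReal] at hdj hej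
  rw [hc j, hdj, hej]; ring

lemma uniq {w : Fin 2 → Fin 2 → ℤ} (hw : IsZBasis w) {c0 c1 d0 d1 : ℝ}
    (h : ∀ j, c0 * w 0 j + c1 * w 1 j = d0 * w 0 j + d1 * w 1 j) : c0 = d0 ∧ c1 = d1 := by
  have hdet : (Matrix.of w).det = w 0 0 * w 1 1 - w 0 1 * w 1 0 := by
    rw [Matrix.det_fin_two]; rfl
  have hD : ((w 0 0 * w 1 1 - w 0 1 * w 1 0 : ℤ) : ℝ) ≠ 0 := by
    have hw' : IsUnit (Matrix.of w).det := hw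
    rw [hdet] at hw'
    rcases Int.isUnit_iff.mp hw' with h' | h' <;> rw [h'] <;> norm_num
  push_cast at hD
  have e0 := h 0; have e1 := h 1
  constructor
  · have : (c0 - d0) * ((w 0 0 : ℝ) * w 1 1 - w 0 1 * w 1 0) = 0 := by
      linear_combination (w 1 1 : ℝ) * e0 - (w 1 0 : ℝ) * e1
    rcases mul_eq_zero.mp this with h' | h'
    · linarith
    · exact absurd h' hD
  · have : (c1 - d1) * ((w 0 0 : ℝ) * w 1 1 - w 0 1 * w 1 0) = 0 := by
      linear_combination (w 0 0 : ℝ) * e1 - (w 0 1 : ℝ) * e0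
    rcases mul_eq_zero.mp this with h' | h'
    · linarith
    · exact absurd h' hD

lemma key : ∀ N : ℕ, ∀ (w : Fin 2 → Fin 2 → ℤ) (a b c d : ℤ), IsZBasis w →
    0 ≤ a → 0 ≤ b → 0 ≤ c → 0 ≤ d →
    (a * d - b * c = 1 ∨ a * d - b * c = -1) → (a + b + c + d).toNat ≤ N →
    ∃ u' : Fin 2 → Fin 2 → ℤ, Relation.ReflTransGen Step w u' ∧
      realCone u' = realCone ![a • w 0 + b • w 1, c • w 0 + d • w 1] := by
  intro N
  induction N with
  | zero =>
    intro w a b c d hw ha hb hc hd hdet hN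
    exfalso
    have ha0 : a = 0 := by omega
    have hb0 : b = 0 := by omega
    have hc0 : c = 0 := by omega
    have hd0 : d = 0 := by omega
    rw [ha0, hb0, hc0, hd0] at hdet
    norm_num at hdet
  | succ N ih =>
    intro w a b c d hw ha hb hc hd hdet hN
    by_cases hA : b ≤ a ∧ d ≤ c
    · -- case A: subdivide, replace w 1 by w 0 + w 1
      have hbd : 0 < b + d := by
        by_contra h'
        have hb0 : b = 0 := by omega
        have hd0 : d = 0 := by omega
        rw [hb0, hd0] at hdet
        simp at hdet
      set w' : Fin 2 → Fin 2 → ℤ := Function.update w 1 (w 0 + w 1) with hw'def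
      have e0 : w' 0 = w 0 := Function.update_of_ne (by decide) _ _
      have e1 : w' 1 = w 0 + w 1 := Function.update_self _ _ _
      have hw' : IsZBasis w' := by
        have hdet2 : (Matrix.of w').det = (Matrix.of w).det := by
          rw [Matrix.det_fin_two, Matrix.det_fin_two]
          simp only [Matrix.of_apply, e0, e1, Pi.add_apply]
          ring
        unfold IsZBasis
        rw [hdet2]; exact hw
      have hdet' : (a - b) * d - b * (c - d) = 1 ∨ (a - b) * d - b * (c - d) = -1 := by
        rcases hdet with h' | h'
        · left; linear_combination h'
        · right; linear_combination h'
      obtain ⟨u', hstep, hcone⟩ := ih w' (a - b) b (c - d) d hw'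
        (by omega) hb (by omega) hd hdet' (by omega)
      refine ⟨u', Relation.ReflTransGen.head ⟨0, 1, by decide, rfl⟩ hstep, ?_⟩
      have v0 : (a - b) • w' 0 + b • w' 1 = a • w 0 + b • w 1 := by
        rw [e0, e1]; funext j
        simp only [Pi.add_apply, Pi.smul_apply, smul_eq_mul]; ring
      have v1 : (c - d) • w' 0 + d • w' 1 = c • w 0 + d • w 1 := by
        rw [e0, e1]; funext j
        simp only [Pi.add_apply, Pi.smul_apply, smul_eq_mul]; ring
      rw [hcone, v0, v1]
    · by_cases hB : a ≤ b ∧ c ≤ d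
      · -- case B: subdivide, replace w 0 by w 1 + w 0
        have hac : 0 < a + c := by
          by_contra h'
          have ha0 : a = 0 := by omega
          have hc0 : c = 0 := by omega
          rw [ha0, hc0] at hdet
          simp at hdet
        set w' : Fin 2 → Fin 2 → ℤ := Function.update w 0 (w 1 + w 0) with hw'def
        have e0 : w' 0 = w 1 + w 0 := Function.update_self _ _ _
        have e1 : w' 1 = w 1 := Function.update_of_ne (by decide) _ _
        have hw' : IsZBasis w' := by
          have hdet2 : (Matrix.of w').det = (Matrix.of w).det := by
            rw [Matrix.det_fin_two, Matrix.det_fin_two]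
            simp only [Matrix.of_apply, e0, e1, Pi.add_apply]
            ring
          unfold IsZBasis
          rw [hdet2]; exact hw
        have hdet' : a * (d - c) - (b - a) * c = 1 ∨ a * (d - c) - (b - a) * c = -1 := by
          rcases hdet with h' | h'
          · left; linear_combination h'
          · right; linear_combination h'
        obtain ⟨u', hstep, hcone⟩ := ih w' a (b - a) c (d - c) hw'
          ha (by omega) hc (by omega) hdet' (by omega)
        refine ⟨u', Relation.ReflTransGen.head ⟨1, 0, by decide, rfl⟩ hstep, ?_⟩
        have v0 : a • w' 0 + (b - a) • w' 1 = a • w 0 + b • w 1 := by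
          rw [e0, e1]; funext j
          simp only [Pi.add_apply, Pi.smul_apply, smul_eq_mul]; ring
        have v1 : c • w' 0 + (d - c) • w' 1 = c • w 0 + d • w 1 := by
          rw [e0, e1]; funext j
          simp only [Pi.add_apply, Pi.smul_apply, smul_eq_mul]; ring
        rw [hcone, v0, v1]
      · -- base cases
        by_cases hab : a < b
        · -- antidiagonal
          have hdc : d < c := by omega
          have key2 : (a + 1) * (d + 1) ≤ b * c :=
            mul_le_mul (by omega) (by omega) (by omega) (by omega)
          have had : a = 0 ∧ d = 0 := by
            rcases hdet with h' | h'
            · exfalso; nlinarith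
            · constructor <;> nlinarith
          obtain ⟨ha0, hd0⟩ := had
          have hbc : b * c = 1 := by
            rcases hdet with h' | h' <;> rw [ha0, hd0] at h' <;> nlinarith
          have hb1 : b = 1 := by nlinarith
          have hc1 : c = 1 := by nlinarith
          refine ⟨w, Relation.ReflTransGen.refl, ?_⟩
          have v0 : a • w 0 + b • w 1 = w 1 := by rw [ha0, hb1]; simp
          have v1 : c • w 0 + d • w 1 = w 0 := by rw [hc1, hd0]; simp
          rw [v0, v1]
          apply Set.Subset.antisymm
          · apply subset2
            · have := gen_mem ![w 1, w 0] 1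
              simpa using this
            · have := gen_mem ![w 1, w 0] 0
              simpa using this
          · apply subset2
            · have := gen_mem w 1
              simpa using this
            · have := gen_mem w 0
              simpa using this
        · -- identity
          have hba : b ≤ a := by omega
          have hcd : c < d := by omega
          have haa : b < a := by omega
          have key2 : (b + 1) * (c + 1) ≤ a * d :=
            mul_le_mul (by omega) (by omega) (by omega) (by omega)
          have hbc : b = 0 ∧ c = 0 := by
            rcases hdet with h' | h'
            · constructor <;> nlinarith
            · exfalso; nlinarith
          obtain ⟨hb0, hc0⟩ := hbc
          have had : a * d = 1 := by
            rcases hdet with h' | h' <;> rw [hb0, hc0] at h' <;> nlinarith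
          have ha1 : a = 1 := by nlinarith
          have hd1 : d = 1 := by nlinarith
          refine ⟨w, Relation.ReflTransGen.refl, ?_⟩
          have v0 : a • w 0 + b • w 1 = w 0 := by rw [ha1, hb0]; simp
          have v1 : c • w 0 + d • w 1 = w 1 := by rw [hc0, hd1]; simp
          rw [v0, v1]
          apply Set.Subset.antisymm
          · apply subset2
            · have := gen_mem ![w 0, w 1] 0
              simpa using this
            · have := gen_mem ![w 0, w 1] 1
              simpa using this
          · apply subset2
            · have := gen_mem w 0
              simpa using this
            · have := gen_mem w 1
              simpa using this

/-- Local strong factorization in dimension 2. -/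
theorem stmt2 (w u : Fin 2 → Fin 2 → ℤ) (hw : IsZBasis w) (hu : IsZBasis u)
    (h : realCone u ⊆ realCone w) :
    ∃ u' : Fin 2 → Fin 2 → ℤ, Relation.ReflTransGen Step w u' ∧ realCone u' = realCone u := by
  have hwU : IsUnit (Matrix.of w).det := hw
  have huU : IsUnit (Matrix.of u).det := hu
  set W := Matrix.of w with hWdef
  set M := Matrix.of u * W⁻¹ with hMdef
  have hMW : M * W = Matrix.of u := by
    rw [hMdef, Matrix.mul_assoc, Matrix.nonsing_inv_mul W hwU, Matrix.mul_one]
  have hentry : ∀ i j, u i j = M i 0 * w 0 j + M i 1 * w 1 j := by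
    intro i j
    have h2 := Matrix.ext_iff.mpr hMW i j
    rw [Matrix.mul_apply, Fin.sum_univ_two] at h2
    simpa [hWdef] using h2.symm
  have hnn : ∀ i k, 0 ≤ M i k := by
    intro i k
    have hmem : toReal (u i) ∈ realCone w := h (gen_mem u i)
    rw [mem2] at hmem
    obtain ⟨c0, c1, hc0, hc1, hc⟩ := hmem
    have hcast : ∀ j, (u i j : ℝ) = (M i 0 : ℝ) * w 0 j + (M i 1 : ℝ) * w 1 j := by
      intro j; rw [hentry i j]; push_cast; ring
    have huq : ∀ j, c0 * (w 0 j : ℝ) + c1 * (w 1 j : ℝ)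
        = (M i 0 : ℝ) * w 0 j + (M i 1 : ℝ) * w 1 j := by
      intro j
      rw [← hcast j, ← hc j]
      rfl
    obtain ⟨h0, h1⟩ := uniq hw huq
    fin_cases k
    · show 0 ≤ M i 0
      have h2 : (0 : ℝ) ≤ ((M i 0 : ℤ) : ℝ) := h0 ▸ hc0
      exact_mod_cast h2
    · show 0 ≤ M i 1
      have h2 : (0 : ℝ) ≤ ((M i 1 : ℤ) : ℝ) := h1 ▸ hc1
      exact_mod_cast h2
  have hdetM : IsUnit M.det := by
    have hdm : (Matrix.of u).det = M.det * W.det := by rw [← hMW, Matrix.det_mul]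
    rw [hdm] at huU
    exact isUnit_of_mul_isUnit_left huU
  have hdet2 : M 0 0 * M 1 1 - M 0 1 * M 1 0 = 1 ∨ M 0 0 * M 1 1 - M 0 1 * M 1 0 = -1 := by
    rw [← Matrix.det_fin_two M]
    exact Int.isUnit_iff.mp hdetM
  obtain ⟨u', hstep, hcone⟩ := key (M 0 0 + M 0 1 + M 1 0 + M 1 1).toNat w
    (M 0 0) (M 0 1) (M 1 0) (M 1 1) hw (hnn 0 0) (hnn 0 1) (hnn 1 0) (hnn 1 1)
    hdet2 le_rfl
  refine ⟨u', hstep, ?_⟩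
  have v0 : M 0 0 • w 0 + M 0 1 • w 1 = u 0 := by
    funext j
    simp only [Pi.add_apply, Pi.smul_apply, smul_eq_mul]
    exact (hentry 0 j).symm
  have v1 : M 1 0 • w 0 + M 1 1 • w 1 = u 1 := by
    funext j
    simp only [Pi.add_apply, Pi.smul_apply, smul_eq_mul]
    exact (hentry 1 j).symm
  rw [hcone, v0, v1]
  apply Set.Subset.antisymm
  · apply subset2
    · have := gen_mem u 0
      simpa using this
    · have := gen_mem u 1
      simpa using this
  · apply subset2
    · have := gen_mem ![u 0, u 1] 0
      simpa using this
    · have := gen_mem ![u 0, u 1] 1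
      simpa using this
end

section
/- (Termination of Christensen's algorithm, n=3.) Consider a 2×3 real matrix with integer first row (a_1,a_2,a_3), gcd(a_1,a_2,a_3)=1, and second row (b_1,b_2,b_3) of positive reals linearly independent over Q. Define a move: if all a_i are nonzero, choose indices i ≠ j with a_i·a_j > 0, and subtract column i from column j if b_j > b_i, or column j from column i if b_i > b_j. Then any sequence of such moves terminates: after finitely many moves some entry of the first row becomes 0. -/
/-- One move of Christensen's algorithm on a state `(a, b)`: all `a i` are nonzero,
we pick `i ≠ j` with `a i` and `a j` of the same sign, and subtract column `i` from
column `j` where `b i < b j`. -/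
def ChrisMove (s t : (Fin 3 → ℤ) × (Fin 3 → ℝ)) : Prop :=
  (∀ k, s.1 k ≠ 0) ∧ ∃ i j : Fin 3, i ≠ j ∧ 0 < s.1 i * s.1 j ∧ s.2 i < s.2 j ∧
    t = (Function.update s.1 j (s.1 j - s.1 i), Function.update s.2 j (s.2 j - s.2 i))

private lemma natAbs_sub_lt_max {x y : ℤ} {M : ℕ} (hx : x.natAbs ≤ M)
    (hy : y.natAbs ≤ M) (h : 0 < x * y) : (y - x).natAbs < M := by
  rcases mul_pos_iff.mp h with ⟨h1, h2⟩ | ⟨h1, h2⟩ <;> omega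

private lemma natAbs_sub_lt {x y : ℤ} (h1 : 0 < x * y) (h2 : 0 < x * (y - x)) :
    (y - x).natAbs < y.natAbs := by
  rcases mul_pos_iff.mp h1 with ⟨ha, hb⟩ | ⟨ha, hb⟩ <;>
    rcases mul_pos_iff.mp h2 with ⟨hc, hd⟩ | ⟨hc, hd⟩ <;> omega

private lemma ev_const (A : ℕ → ℕ) (K : ℕ) (hA : ∀ k, K ≤ k → A (k+1) ≤ A k) :
    ∃ K', K ≤ K' ∧ ∀ k, K' ≤ k → A k = A K' := by
  have mono : ∀ m n, K ≤ m → m ≤ n → A n ≤ A m := by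
    intro m n hm hmn
    induction n, hmn using Nat.le_induction with
    | base => exact le_refl _
    | succ n hn ih => exact le_trans (hA n (le_trans hm hn)) ih
  have hne : (Set.range fun n => A (K + n)).Nonempty := ⟨A (K + 0), 0, rfl⟩
  obtain ⟨n₀, hn₀⟩ := Nat.sInf_mem hne
  refine ⟨K + n₀, Nat.le_add_right _ _, fun k hk => le_antisymm ?_ ?_⟩
  · exact mono _ _ (Nat.le_add_right _ _) hk
  · exact le_of_eq_of_le hn₀ (Nat.sInf_le ⟨k - K, by simp only []; congr 1; omega⟩)

private lemma fin3_pair : ∀ p x y z w : Fin 3, x ≠ p → y ≠ p → z ≠ p → w ≠ p →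
    x ≠ y → z ≠ w → (z = x ∧ w = y) ∨ (z = y ∧ w = x) := by decide

/-- Termination of Christensen's algorithm for n = 3: there is no infinite sequence
of moves starting from a state with coprime integer row and positive rationally
independent real row. -/
theorem stmt5 (f : ℕ → (Fin 3 → ℤ) × (Fin 3 → ℝ))
    (hgcd : Finset.univ.gcd (f 0).1 = 1)
    (hb : ∀ i, 0 < (f 0).2 i) (hind : LinearIndependent ℚ (f 0).2)
    (hmove : ∀ k, ChrisMove (f k) (f (k+1))) : False := by
  have H : ∀ k, ∃ i j : Fin 3, i ≠ j ∧ 0 < (f k).1 i * (f k).1 j ∧ (f k).2 i < (f k).2 j ∧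
      f (k+1) = (Function.update (f k).1 j ((f k).1 j - (f k).1 i),
        Function.update (f k).2 j ((f k).2 j - (f k).2 i)) := fun k => (hmove k).2
  choose I J hIJ hprod hblt heq using H
  have ha' : ∀ k, (f (k+1)).1 = Function.update (f k).1 (J k) ((f k).1 (J k) - (f k).1 (I k)) :=
    fun k => by rw [heq k]
  have hb' : ∀ k, (f (k+1)).2 = Function.update (f k).2 (J k) ((f k).2 (J k) - (f k).2 (I k)) :=
    fun k => by rw [heq k]
  -- positivity of b at all times
  have hbpos : ∀ k i, 0 < (f k).2 i := by
    intro k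
    induction k with
    | zero => exact hb
    | succ k ih =>
      intro i
      rw [hb' k, Function.update_apply]
      split
      · exact sub_pos.mpr (hblt k)
      · exact ih i
  -- b is coordinatewise non-increasing
  have hbmono : ∀ k i, (f (k+1)).2 i ≤ (f k).2 i := by
    intro k i
    rw [hb' k, Function.update_apply]
    split
    next h =>
      rw [h]
      have := hbpos k (I k)
      linarith
    next h => exact le_refl _
  have hbmono' : ∀ i m n, m ≤ n → (f n).2 i ≤ (f m).2 i := by
    intro i m n hmn
    induction n, hmn using Nat.le_induction with
    | base => exact le_refl _
    | succ n hn ih => exact le_trans (hbmono n i) ih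
  -- the maximum of |a| is non-increasing
  have hle : ∀ k i, ((f k).1 i).natAbs ≤ Finset.univ.sup (fun i => ((f k).1 i).natAbs) :=
    fun k i => Finset.le_sup (f := fun i => ((f k).1 i).natAbs) (Finset.mem_univ i)
  have hAmono : ∀ k, (Finset.univ.sup fun i => ((f (k+1)).1 i).natAbs) ≤
      Finset.univ.sup fun i => ((f k).1 i).natAbs := by
    intro k
    apply Finset.sup_le
    intro i _
    rw [ha' k, Function.update_apply]
    split
    · exact le_of_lt (natAbs_sub_lt_max (hle k (I k)) (hle k (J k)) (hprod k))
    · exact hle k i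
  obtain ⟨K₀, -, hK₀⟩ := ev_const (fun k => Finset.univ.sup fun i => ((f k).1 i).natAbs) 0
    (fun k _ => hAmono k)
  set M := Finset.univ.sup fun i => ((f K₀).1 i).natAbs with hMdef
  have hMk : ∀ k, K₀ ≤ k → (Finset.univ.sup fun i => ((f k).1 i).natAbs) = M := hK₀
  have hleM : ∀ k, K₀ ≤ k → ∀ i, ((f k).1 i).natAbs ≤ M := by
    intro k hk i
    rw [← hMk k hk]
    exact hle k i
  -- after time K₀, the target coordinate always ends with |a| < M
  have htarget : ∀ k, K₀ ≤ k → ((f (k+1)).1 (J k)).natAbs < M := by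
    intro k hk
    rw [ha' k, Function.update_self]
    exact natAbs_sub_lt_max (hleM k hk (I k)) (hleM k hk (J k)) (hprod k)
  -- the set of coordinates attaining M
  have hSsub : ∀ k, K₀ ≤ k →
      (Finset.univ.filter fun i => ((f (k+1)).1 i).natAbs = M) ⊆
        Finset.univ.filter fun i => ((f k).1 i).natAbs = M := by
    intro k hk i hi
    rw [Finset.mem_filter] at hi ⊢
    refine ⟨Finset.mem_univ i, ?_⟩
    have hij : i ≠ J k := by
      intro h
      rw [h] at hi
      exact (Nat.ne_of_lt (htarget k hk)) hi.2
    rw [ha' k, Function.update_of_ne hij] at hi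
    exact hi.2
  obtain ⟨K₁, hK₁₀, hK₁⟩ := ev_const
    (fun k => (Finset.univ.filter fun i => ((f k).1 i).natAbs = M).card) K₀
    (fun k hk => Finset.card_le_card (hSsub k hk))
  set S := Finset.univ.filter (fun i => ((f K₁).1 i).natAbs = M) with hSdef
  have hSeq : ∀ k, K₁ ≤ k → (Finset.univ.filter fun i => ((f k).1 i).natAbs = M) = S := by
    intro k hk
    induction k, hk using Nat.le_induction with
    | base => rfl
    | succ k hk ih =>
      have h1 := hSsub k (le_trans hK₁₀ hk)
      have h2 : (Finset.univ.filter fun i => ((f k).1 i).natAbs = M).card ≤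
          (Finset.univ.filter fun i => ((f (k+1)).1 i).natAbs = M).card := by
        have e1 := hK₁ k hk
        have e2 := hK₁ (k+1) (by omega)
        omega
      exact (Finset.eq_of_subset_of_card_le h1 h2).trans ih
  have hJS : ∀ k, K₁ ≤ k → J k ∉ S := by
    intro k hk
    rw [← hSeq (k+1) (by omega), Finset.mem_filter]
    rintro ⟨-, h⟩
    exact (Nat.ne_of_lt (htarget k (le_trans hK₁₀ hk))) h
  have hconst : ∀ i, i ∈ S → ∀ k, K₁ ≤ k → (f k).1 i = (f K₁).1 i ∧ (f k).2 i = (f K₁).2 i := by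
    intro i hi k hk
    induction k, hk using Nat.le_induction with
    | base => exact ⟨rfl, rfl⟩
    | succ k hk ih =>
      have hij : i ≠ J k := fun h => hJS k hk (h ▸ hi)
      constructor
      · rw [ha' k, Function.update_of_ne hij]; exact ih.1
      · rw [hb' k, Function.update_of_ne hij]; exact ih.2
  have hSne : S.Nonempty := by
    obtain ⟨i, -, hi⟩ := Finset.exists_mem_eq_sup Finset.univ Finset.univ_nonempty
      (fun i => ((f K₁).1 i).natAbs)
    refine ⟨i, Finset.mem_filter.mpr ⟨Finset.mem_univ i, ?_⟩⟩
    rw [← hi]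
    exact hMk K₁ hK₁₀
  -- sum of b row
  have hg : ∀ k, (∑ i, (f (k+1)).2 i) = (∑ i, (f k).2 i) - (f k).2 (I k) := by
    intro k
    rw [hb' k]
    rw [Finset.sum_update_of_mem (Finset.mem_univ (J k))]
    rw [show (Finset.univ \ {J k} : Finset (Fin 3)) = Finset.univ.erase (J k) from
      Finset.sdiff_singleton_eq_erase _ _]
    rw [← Finset.add_sum_erase Finset.univ _ (Finset.mem_univ (J k))]
    ring
  have hgpos : ∀ k, 0 < ∑ i, (f k).2 i :=
    fun k => Finset.sum_pos (fun i _ => hbpos k i) Finset.univ_nonempty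
  have hgmono : ∀ m n, m ≤ n → (∑ i, (f n).2 i) ≤ ∑ i, (f m).2 i := by
    intro m n hmn
    exact Finset.sum_le_sum (fun i _ => hbmono' i m n hmn)
  -- case analysis on |S|
  have hcard : S.card = 1 ∨ S.card = 2 ∨ S.card = 3 := by
    have h1 : 1 ≤ S.card := Finset.card_pos.mpr hSne
    have h3 : S.card ≤ 3 := le_trans (Finset.card_le_univ S) (by simp)
    omega
  rcases hcard with h1 | h2 | h3
  · -- |S| = 1 : eventually moves happen between the two non-p coordinates,
    -- and the sum of |a| over those strictly decreases.
    obtain ⟨p, hp⟩ := Finset.card_eq_one.mp h1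
    have hpS : p ∈ S := hp ▸ Finset.mem_singleton_self p
    have hJp : ∀ k, K₁ ≤ k → J k ≠ p := fun k hk h => hJS k hk (h ▸ hpS)
    have hbp : ∀ k, K₁ ≤ k → (f k).2 p = (f K₁).2 p := fun k hk => (hconst p hpS k hk).2
    have hK₂ : ∃ K₂, K₁ ≤ K₂ ∧ ∀ k, K₂ ≤ k → I k ≠ p := by
      by_contra hcon
      push_neg at hcon
      have key : ∀ n : ℕ, ∃ k, K₁ ≤ k ∧
          (∑ i, (f k).2 i) ≤ (∑ i, (f K₁).2 i) - (n : ℝ) * (f K₁).2 p := by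
        intro n
        induction n with
        | zero => exact ⟨K₁, le_rfl, by simp⟩
        | succ n ih =>
          obtain ⟨k, hk, hgk⟩ := ih
          obtain ⟨k', hk', hIk'⟩ := hcon k hk
          refine ⟨k' + 1, by omega, ?_⟩
          have e1 := hg k'
          rw [hIk', hbp k' (by omega)] at e1
          have e2 : (∑ i, (f k').2 i) ≤ ∑ i, (f k).2 i := hgmono k k' hk'
          push_cast
          linarith
      obtain ⟨n, hn⟩ := exists_nat_gt ((∑ i, (f K₁).2 i) / (f K₁).2 p)
      obtain ⟨k, hk, hgk⟩ := key n
      have hβ := hbpos K₁ p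
      rw [div_lt_iff₀ hβ] at hn
      have := hgpos k
      linarith
    obtain ⟨K₂, hK₂₁, hK₂⟩ := hK₂
    have hNstep : ∀ k, K₂ ≤ k →
        (∑ i, ((f (k+1)).1 i).natAbs) < ∑ i, ((f k).1 i).natAbs := by
      intro k hk
      have hx : (f (k+1)).1 (I k) = (f k).1 (I k) := by
        rw [ha' k, Function.update_of_ne (hIJ k)]
      have hy : (f (k+1)).1 (J k) = (f k).1 (J k) - (f k).1 (I k) := by
        rw [ha' k, Function.update_self]
      have hpair := fin3_pair p (I k) (J k) (I (k+1)) (J (k+1))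
        (hK₂ k hk) (hJp k (by omega)) (hK₂ (k+1) (by omega)) (hJp (k+1) (by omega))
        (hIJ k) (hIJ (k+1))
      have hprod2 : 0 < (f (k+1)).1 (I k) * (f (k+1)).1 (J k) := by
        rcases hpair with ⟨e1, e2⟩ | ⟨e1, e2⟩
        · rw [← e1, ← e2]; exact hprod (k+1)
        · rw [mul_comm, ← e1, ← e2]; exact hprod (k+1)
      rw [hx, hy] at hprod2
      have hlt := natAbs_sub_lt (hprod k) hprod2
      have comp : ∀ i, ((Function.update (f k).1 (J k)
          ((f k).1 (J k) - (f k).1 (I k))) i).natAbs =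
          Function.update (fun i => ((f k).1 i).natAbs) (J k)
            ((f k).1 (J k) - (f k).1 (I k)).natAbs i := by
        intro i
        rw [Function.update_apply, Function.update_apply, apply_ite Int.natAbs]
      calc (∑ i, ((f (k+1)).1 i).natAbs)
          = ((f k).1 (J k) - (f k).1 (I k)).natAbs +
            ∑ i ∈ Finset.univ.erase (J k), ((f k).1 i).natAbs := by
            rw [ha' k, Finset.sum_congr rfl (fun i _ => comp i),
              Finset.sum_update_of_mem (Finset.mem_univ _)]
            rw [show (Finset.univ \ {J k} : Finset (Fin 3)) = Finset.univ.erase (J k) from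
              Finset.sdiff_singleton_eq_erase _ _]
        _ < ((f k).1 (J k)).natAbs + ∑ i ∈ Finset.univ.erase (J k), ((f k).1 i).natAbs :=
            Nat.add_lt_add_right hlt _
        _ = ∑ i, ((f k).1 i).natAbs :=
            Finset.add_sum_erase _ (fun i => ((f k).1 i).natAbs) (Finset.mem_univ _)
    have hiterN : ∀ n, (∑ i, ((f (K₂ + n)).1 i).natAbs) + n ≤ ∑ i, ((f K₂).1 i).natAbs := by
      intro n
      induction n with
      | zero => simp
      | succ n ih =>
        have h' := hNstep (K₂ + n) (by omega)
        show (∑ i, ((f (K₂ + n + 1)).1 i).natAbs) + (n + 1) ≤ _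
        omega
    have := hiterN ((∑ i, ((f K₂).1 i).natAbs) + 1)
    omega
  · -- |S| = 2 : the source is always in S, so the sum of b decreases by a fixed amount
    obtain ⟨r, hr⟩ := Finset.card_eq_one.mp (by
      rw [Finset.card_compl, Fintype.card_fin, h2] : Sᶜ.card = 1)
    have hIr : ∀ k, K₁ ≤ k → I k ∈ S := by
      intro k hk
      by_contra hI
      have h1 : I k ∈ Sᶜ := Finset.mem_compl.mpr hI
      rw [hr, Finset.mem_singleton] at h1
      have h2' : J k ∈ Sᶜ := Finset.mem_compl.mpr (hJS k hk)
      rw [hr, Finset.mem_singleton] at h2'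
      exact hIJ k (h1.trans h2'.symm)
    have hδpos : 0 < S.inf' hSne ((f K₁).2) := by
      rw [Finset.lt_inf'_iff]
      exact fun i _ => hbpos K₁ i
    have hstep : ∀ k, K₁ ≤ k →
        (∑ i, (f (k+1)).2 i) ≤ (∑ i, (f k).2 i) - S.inf' hSne ((f K₁).2) := by
      intro k hk
      rw [hg k]
      have h1 : S.inf' hSne ((f K₁).2) ≤ (f k).2 (I k) := by
        rw [(hconst (I k) (hIr k hk) k hk).2]
        exact Finset.inf'_le _ (hIr k hk)
      linarith
    have hiter : ∀ n : ℕ, (∑ i, (f (K₁ + n)).2 i) ≤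
        (∑ i, (f K₁).2 i) - (n : ℝ) * S.inf' hSne ((f K₁).2) := by
      intro n
      induction n with
      | zero => simp
      | succ n ih =>
        have h' := hstep (K₁ + n) (by omega)
        show (∑ i, (f (K₁ + n + 1)).2 i) ≤ _
        push_cast
        push_cast at ih
        linarith
    obtain ⟨n, hn⟩ := exists_nat_gt ((∑ i, (f K₁).2 i) / S.inf' hSne ((f K₁).2))
    have h1 := hiter n
    have h2' := hgpos (K₁ + n)
    rw [div_lt_iff₀ hδpos] at hn
    linarith
  · -- |S| = 3 : no coordinate may be targeted, contradiction
    have : S = Finset.univ := Finset.eq_univ_of_card S (by rw [h3, Fintype.card_fin])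
    exact hJS K₁ le_rfl (this ▸ Finset.mem_univ (J K₁))
end

section
/- Let b_1,...,b_n be nonnegative real numbers, not all zero. Consider the operation: choose i ≠ j with 0 < b_i ≤ b_j and replace b_j by b_j - b_i. Then after finitely many such operations one can reach a state in which the nonzero entries are linearly independent over Q; that is, there exists a finite sequence of these operations whose result (b'_1,...,b'_n) has its nonzero entries rationally independent. -/
/-- The operation: subtract a smaller positive entry from a larger one. -/
def SubOp {n : ℕ} (b b' : Fin n → ℝ) : Prop :=
  ∃ i j, i ≠ j ∧ 0 < b i ∧ b i ≤ b j ∧ b' = Function.update b j (b j - b i)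

/-
If the nonzero entries of `b ≥ 0` satisfy a nontrivial integer relation `∑ m k • b k = 0`, the
move `b j ← b j - b i` transports it to the relation with `m i ← m i + m j`. Pairing a coefficient
of maximal size with one of opposite sign (one exists since `b ≥ 0`), suitable moves lower the
maximal size of the coefficients or the number of coefficients attaining it, until some entry of
`b` drops to zero. Induction on the support then ends at a vector whose nonzero entries are
independent over `ℤ`, hence over `ℚ`.
-/

open Finset Function Relation

theorem sum_update_smul_update_sub {ι R M : Type*} [Fintype ι] [DecidableEq ι] [Semiring R]
    [AddCommGroup M] [Module R M] (m : ι → R) (b : ι → M) {i j : ι} (hij : i ≠ j) :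
    ∑ k, update m i (m i + m j) k • update b j (b j - b i) k = ∑ k, m k • b k := by
  have hi := Finset.mem_univ i
  have hj : j ∈ (univ : Finset ι).erase i := mem_erase.2 ⟨hij.symm, mem_univ j⟩
  rw [← add_sum_erase _ _ hi, ← add_sum_erase _ _ hi, ← add_sum_erase _ _ hj,
    ← add_sum_erase _ _ hj]
  simp only [update_self, update_of_ne hij, update_of_ne hij.symm]
  rw [sum_congr rfl fun k hk => by
    rw [update_of_ne (ne_of_mem_erase hk), update_of_ne (ne_of_mem_erase (mem_of_mem_erase hk))]]
  simp only [add_smul, smul_sub]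
  abel

theorem Finset.filter_update_eq_erase {ι α : Type*} [Fintype ι] [DecidableEq ι] (p : α → Prop)
    [DecidablePred p] (f : ι → α) (i : ι) {a : α} (ha : ¬p a) :
    ({k | p (update f i a k)} : Finset ι) = ({k | p (f k)} : Finset ι).erase i := by
  ext k
  by_cases hk : k = i
  · subst hk; simp [ha]
  · simp [hk]

variable {n : ℕ}

theorem SubOp.support_subset {b b' : Fin n → ℝ} (h : SubOp b b') : support b' ⊆ support b := by
  obtain ⟨i, j, -, hi, hij, rfl⟩ := h
  intro k hk
  by_cases hkj : k = j
  · subst hkj; exact (hi.trans_le hij).ne'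
  · simpa [hkj] using hk

theorem SubOp.nonneg {b b' : Fin n → ℝ} (h : SubOp b b') (hb : 0 ≤ b) : 0 ≤ b' := by
  obtain ⟨i, j, -, -, hij, rfl⟩ := h
  intro k
  by_cases hkj : k = j
  · subst hkj; simpa using hij
  · simpa [hkj] using hb k

theorem SubOp.support_subset_of_reflTransGen {b b' : Fin n → ℝ} (h : ReflTransGen SubOp b b') :
    support b' ⊆ support b := by
  induction h with
  | refl => exact subset_rfl
  | tail _ h ih => exact h.support_subset.trans ih

theorem SubOp.nonneg_of_reflTransGen {b b' : Fin n → ℝ} (h : ReflTransGen SubOp b b')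
    (hb : 0 ≤ b) : 0 ≤ b' := by
  induction h with
  | refl => exact hb
  | tail _ h ih => exact h.nonneg ih

theorem Int.natAbs_add_lt_of_mul_neg {x y : ℤ} (h : x * y < 0) (hxy : x.natAbs ≤ y.natAbs) :
    (x + y).natAbs < y.natAbs := by
  rcases mul_neg_iff.1 h with ⟨hx, hy⟩ | ⟨hx, hy⟩ <;> omega

theorem Int.add_mul_nonneg_of_mul_neg {x y : ℤ} (h : x * y < 0) (hxy : x.natAbs ≤ y.natAbs) :
    0 ≤ (x + y) * y := by
  rcases mul_neg_iff.1 h with ⟨hx, hy⟩ | ⟨hx, hy⟩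
  · exact mul_nonneg_of_nonpos_of_nonpos (by omega) hy.le
  · exact mul_nonneg (by omega) hy.le

def CanShrinkSupport (b : Fin n → ℝ) : Prop :=
  ∃ b', ReflTransGen SubOp b b' ∧ support b' ⊂ support b

theorem CanShrinkSupport.of_reflTransGen {b b' : Fin n → ℝ} (h : ReflTransGen SubOp b b')
    (h' : CanShrinkSupport b') : CanShrinkSupport b :=
  let ⟨c, hc, hsub⟩ := h'
  ⟨c, h.trans hc, hsub.trans_subset (SubOp.support_subset_of_reflTransGen h)⟩

def IsIntRelation (b : Fin n → ℝ) (m : Fin n → ℤ) : Prop :=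
  support m ⊆ support b ∧ ∑ k, m k • b k = 0

theorem exists_isIntRelation_of_not_linearIndepOn {b : Fin n → ℝ}
    (h : ¬LinearIndepOn ℚ b (support b)) : ∃ m : Fin n → ℤ, m ≠ 0 ∧ IsIntRelation b m := by
  rw [LinearIndepOn, ← LinearIndependent.iff_fractionRing ℤ ℚ, ← LinearIndepOn,
    linearDepOn_iff'] at h
  obtain ⟨f, hsupp, hrel, hf⟩ := h
  refine ⟨f, by simpa using hf, by simpa [Finsupp.mem_supported] using hsupp, ?_⟩
  simpa [Finsupp.linearCombination_apply, Finsupp.sum_fintype] using hrel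

theorem IsIntRelation.exists_mul_neg {b : Fin n → ℝ} {m : Fin n → ℤ} (hb : 0 ≤ b)
    (hm : IsIntRelation b m) {M : Fin n} (hM : m M ≠ 0) : ∃ t, m t * m M < 0 := by
  by_contra! hcon
  have hbM : 0 < b M := (hb M).lt_of_ne' (hm.1 hM)
  have hpos : 0 < ∑ k, ((m k * m M : ℤ) : ℝ) * b k :=
    sum_pos' (fun k _ => mul_nonneg (by exact_mod_cast hcon k) (hb k))
      ⟨M, mem_univ M, mul_pos (by exact_mod_cast mul_self_pos.2 hM) hbM⟩
  have hzero : ∑ k, ((m k * m M : ℤ) : ℝ) * b k = 0 := by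
    simp_rw [Int.cast_mul, mul_right_comm _ (m M : ℝ), ← Finset.sum_mul, ← zsmul_eq_mul, hm.2,
      zero_mul]
  exact hpos.ne' hzero

theorem IsIntRelation.canShrinkSupport_or_subOp {b : Fin n → ℝ} {m : Fin n → ℤ} (hb : 0 ≤ b)
    (hm : IsIntRelation b m) {i j : Fin n} (hij : i ≠ j) (hi : m i ≠ 0) (hle : b i ≤ b j) :
    CanShrinkSupport b ∨ ReflTransGen SubOp b (update b j (b j - b i)) ∧
      IsIntRelation (update b j (b j - b i)) (update m i (m i + m j)) := by
  have hbi : 0 < b i := (hb i).lt_of_ne' (hm.1 hi)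
  have hstep : SubOp b (update b j (b j - b i)) := ⟨i, j, hij, hbi, hle, rfl⟩
  by_cases hkill : b j - b i = 0
  · refine .inl ⟨_, .single hstep, (Set.ssubset_iff_of_subset hstep.support_subset).2
      ⟨j, (hbi.trans_le hle).ne', by simp [hkill]⟩⟩
  refine .inr ⟨.single hstep, fun k hk => ?_, (sum_update_smul_update_sub m b hij).trans hm.2⟩
  by_cases hkj : k = j
  · subst hkj; simpa using hkill
  by_cases hki : k = i
  · subst hki; simpa [hkj] using hm.1 hi
  · simpa [hkj, hki] using hm.1 (by simpa [hki] using hk)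

/- `m M` is a coefficient of maximal size `A`. If some entry whose coefficient has the opposite
sign is at least `b M`, subtracting `b M` from it pushes `|m M|` below `A`. Otherwise subtract
such an entry from `b M`: this leaves `m M` alone and makes that coefficient lose its opposite
sign, so we recurse on the number of coefficients of sign opposite to `m M`. -/
theorem IsIntRelation.canShrinkSupport_or_fewer_maximal {M : Fin n} {A : ℕ} (b : Fin n → ℝ)
    (m : Fin n → ℤ) (hb : 0 ≤ b) (hm : IsIntRelation b m) (hM0 : m M ≠ 0) (hM : (m M).natAbs = A)
    (hmax : ∀ k, (m k).natAbs ≤ A) :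
    CanShrinkSupport b ∨ ∃ b' m', ReflTransGen SubOp b b' ∧ IsIntRelation b' m' ∧ m' ≠ 0 ∧
      (∀ k, (m' k).natAbs ≤ A) ∧ #{k | (m' k).natAbs = A} < #{k | (m k).natAbs = A} := by
  obtain ⟨t₀, ht₀⟩ := hm.exists_mul_neg hb hM0
  by_cases hlarge : ∃ t, m t * m M < 0 ∧ b M ≤ b t
  · obtain ⟨t, ht, hle⟩ := hlarge
    have hMt : M ≠ t := by rintro rfl; exact (mul_self_nonneg _).not_gt ht
    have hlt := Int.natAbs_add_lt_of_mul_neg ht (hM ▸ hmax t)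
    rw [add_comm] at hlt
    refine (hm.canShrinkSupport_or_subOp hb hMt hM0 hle).imp_right
      fun ⟨hr, hm'⟩ => ⟨_, _, hr, hm', ?_, ?_, ?_⟩
    · intro h
      have := congrFun h t
      simp only [update_of_ne hMt.symm, Pi.zero_apply] at this
      exact (mul_eq_zero_of_left this _).not_lt ht
    · intro k
      by_cases hk : k = M
      · subst hk; simp only [update_self]; omega
      · simpa [hk] using hmax k
    · rw [filter_update_eq_erase (fun x : ℤ => x.natAbs = A) m M (a := m M + m t)
        (by omega)]
      exact card_erase_lt_of_mem (by simp [hM])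
  · push Not at hlarge
    have ht₀M : t₀ ≠ M := by rintro rfl; exact (mul_self_nonneg _).not_gt ht₀
    have hmt₀ : m t₀ ≠ 0 := by rintro h; simp [h] at ht₀
    have hlt := Int.natAbs_add_lt_of_mul_neg ht₀ (hM ▸ hmax t₀)
    rcases hm.canShrinkSupport_or_subOp hb ht₀M hmt₀ (hlarge t₀ ht₀).le with h | ⟨hr, hm'⟩
    · exact .inl h
    have hm'M : update m t₀ (m t₀ + m M) M = m M := update_of_ne ht₀M.symm _ _
    have hdec : #{k | update m t₀ (m t₀ + m M) k * update m t₀ (m t₀ + m M) M < 0} <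
        #{k | m k * m M < 0} := by
      rw [hm'M, filter_update_eq_erase (fun x => x * m M < 0) m t₀
        (Int.add_mul_nonneg_of_mul_neg ht₀ (hM ▸ hmax t₀)).not_gt]
      exact card_erase_lt_of_mem (by simpa using ht₀)
    have hmax' : ∀ k, (update m t₀ (m t₀ + m M) k).natAbs ≤ A := by
      intro k
      by_cases hk : k = t₀
      · subst hk; simp only [update_self]; omega
      · simpa [hk] using hmax k
    rcases canShrinkSupport_or_fewer_maximal _ _ (SubOp.nonneg_of_reflTransGen hr hb) hm'
      (by rwa [hm'M]) (by rwa [hm'M]) hmax' with h | ⟨b'', m'', hr', hm'', hne, hmax'', hcard⟩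
    · exact .inl (h.of_reflTransGen hr)
    · refine .inr ⟨b'', m'', hr.trans hr', hm'', hne, hmax'', hcard.trans_le ?_⟩
      rw [filter_update_eq_erase (fun x : ℤ => x.natAbs = A) m t₀ (a := m t₀ + m M)
        (by omega)]
      exact card_erase_le
termination_by #{k | m k * m M < 0}
decreasing_by exact hdec

theorem IsIntRelation.canShrinkSupport (b : Fin n → ℝ) (m : Fin n → ℤ) (hb : 0 ≤ b)
    (hm : IsIntRelation b m) (hm0 : m ≠ 0) : CanShrinkSupport b := by
  obtain ⟨k₀, hk₀⟩ : ∃ k, m k ≠ 0 := by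
    by_contra! h
    exact hm0 (funext h)
  obtain ⟨M, -, hM⟩ := exists_mem_eq_sup univ ⟨k₀, mem_univ k₀⟩ fun k => (m k).natAbs
  have hM0 : m M ≠ 0 := by
    have := le_sup (f := fun k => (m k).natAbs) (mem_univ k₀)
    omega
  rcases hm.canShrinkSupport_or_fewer_maximal b m hb hM0 hM.symm
      fun k => le_sup (f := fun k => (m k).natAbs) (mem_univ k) with
    h | ⟨b', m', hr, hm', hm'0, hmax, hcard⟩
  · exact h
  · exact (canShrinkSupport b' m' (SubOp.nonneg_of_reflTransGen hr hb) hm' hm'0).of_reflTransGen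
      hr
termination_by
  (univ.sup fun k => (m k).natAbs, #{k | (m k).natAbs = univ.sup fun k => (m k).natAbs})
decreasing_by
  rcases (Finset.sup_le fun k _ => hmax k).lt_or_eq with hlt | heq
  · exact Prod.Lex.left _ _ hlt
  · rw [heq]
    exact Prod.Lex.right _ hcard

theorem exists_reflTransGen_linearIndepOn_support (b : Fin n → ℝ) (hb : 0 ≤ b) :
    ∃ b', ReflTransGen SubOp b b' ∧ LinearIndepOn ℚ b' (support b') := by
  by_cases hind : LinearIndepOn ℚ b (support b)
  · exact ⟨b, .refl, hind⟩
  obtain ⟨m, hm0, hm⟩ := exists_isIntRelation_of_not_linearIndepOn hind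
  obtain ⟨b', hr, hlt⟩ := hm.canShrinkSupport b m hb hm0
  obtain ⟨b'', hr', hind'⟩ :=
    exists_reflTransGen_linearIndepOn_support b' (SubOp.nonneg_of_reflTransGen hr hb)
  exact ⟨b'', hr.trans hr', hind'⟩
termination_by (support b).ncard
decreasing_by exact Set.ncard_lt_ncard hlt

theorem stmt7_general {n : ℕ} (b : Fin n → ℝ) (hb : ∀ i, 0 ≤ b i) :
    ∃ b', Relation.ReflTransGen SubOp b b' ∧
      LinearIndependent ℚ (fun i : {i // b' i ≠ 0} => b' i.1) :=
  exists_reflTransGen_linearIndepOn_support b hb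

/-- Starting from a nonzero nonnegative vector, finitely many subtraction operations
can reach a vector whose nonzero entries are rationally independent. -/
theorem stmt7 {n : ℕ} (b : Fin n → ℝ) (hb : ∀ i, 0 ≤ b i) (hne : b ≠ 0) :
    ∃ b', Relation.ReflTransGen SubOp b b' ∧
      LinearIndependent ℚ (fun i : {i // b' i ≠ 0} => b' i.1) :=
  stmt7_general b hb
end

section
/- (Key step of Lemma 3, n=3.) Let τ = ⟨u_1,u_2,u_3⟩ ⊆ σ = ⟨w_1,w_2,w_3⟩ be nonsingular 3-dimensional cones in Z^3 with w_1, u_1, u_2 linearly dependent, and let v ∈ τ have rationally independent coordinates. Then τ can be obtained from σ by a finite sequence of star subdivisions along v (direct factorizability). -/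
namespace Stmt18Aux

abbrev Mat := Fin 3 → Fin 3 → ℤ

/-- one step: add row i to row j -/
def UStep (a b : Mat) : Prop :=
  ∃ i j : Fin 3, i ≠ j ∧ b = Function.update a j (a i + a j)

lemma toReal_add (p q : Fin 3 → ℤ) : toReal (p + q) = toReal p + toReal q := by
  funext j; simp [toReal]

lemma realCone_update_subset (a : Mat) (i j : Fin 3) (hij : i ≠ j) :
    realCone (Function.update a j (a i + a j)) ⊆ realCone a := by
  rintro x ⟨c, hc, rfl⟩
  refine ⟨fun k => c k + (if k = i then c j else 0), fun k => ?_, ?_⟩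
  · have := hc k; have := hc j; simp only []; split <;> linarith
  · have h1 : ∀ k, c k • toReal (Function.update a j (a i + a j) k)
        = c k • toReal (a k) + (if k = j then c j • toReal (a i) else 0) := by
      intro k
      by_cases hk : k = j
      · subst hk; simp [Function.update_self, toReal_add, smul_add]; abel
      · simp [Function.update_of_ne hk, hk]
    rw [Finset.sum_congr rfl (fun k _ => h1 k), Finset.sum_add_distrib]
    have h2 : ∀ k, (c k + (if k = i then c j else 0)) • toReal (a k)
        = c k • toReal (a k) + (if k = i then c j • toReal (a i) else 0) := by
      intro k; by_cases hk : k = i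
      · subst hk; simp [add_smul]
      · simp [hk]
    rw [Finset.sum_congr rfl (fun k _ => h2 k), Finset.sum_add_distrib]
    congr 1
    rw [Finset.sum_ite_eq' Finset.univ j (fun _ => c j • toReal (a i)),
        Finset.sum_ite_eq' Finset.univ i (fun _ => c j • toReal (a i))]
    simp

lemma star_of_chain {v : Fin 3 → ℝ} {a b : Mat}
    (h : Relation.ReflTransGen UStep a b) (hv : v ∈ realCone b) :
    Relation.ReflTransGen (StarStep v) a b := by
  induction h with
  | refl => exact Relation.ReflTransGen.refl
  | tail hab step ih =>
    obtain ⟨i, j, hij, rfl⟩ := step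
    have hvb := realCone_update_subset _ i j hij hv
    exact (ih hvb).tail ⟨i, j, hij, rfl, hv⟩

lemma two_dim (a b c d : ℤ) (ha : 0 ≤ a) (hb : 0 ≤ b) (hc : 0 ≤ c) (hd : 0 ≤ d)
    (hdet : a * d - b * c = 1 ∨ a * d - b * c = -1) :
    ((a = 1 ∧ b = 0 ∧ c = 0 ∧ d = 1) ∨ (a = 0 ∧ b = 1 ∧ c = 1 ∧ d = 0)) ∨
      ((c ≤ a ∧ d ≤ b ∧ (0 < c ∨ 0 < d)) ∨ (a ≤ c ∧ b ≤ d ∧ (0 < a ∨ 0 < b))) := by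
  by_cases h1 : c ≤ a ∧ d ≤ b
  · right; left
    refine ⟨h1.1, h1.2, ?_⟩
    by_contra hcd
    push_neg at hcd
    have hc0 : c = 0 := by omega
    have hd0 : d = 0 := by omega
    subst hc0 hd0; simp at hdet
  · by_cases h2 : a ≤ c ∧ b ≤ d
    · right; right
      refine ⟨h2.1, h2.2, ?_⟩
      by_contra hab
      push_neg at hab
      have ha0 : a = 0 := by omega
      have hb0 : b = 0 := by omega
      subst ha0 hb0; simp at hdet
    · left
      push_neg at h1 h2
      rcases le_or_gt a c with hac | hca
      · have hdb : d < b := h2 hac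
        have hac' : a < c := by
          rcases lt_or_ge a c with h | h
          · exact h
          · exact absurd (h1 (by omega)) (by omega)
        have hdm1 : a * d - b * c = -1 := by
          rcases hdet with h | h
          · exfalso; nlinarith
          · exact h
        have ha0 : a = 0 := by nlinarith
        have hd0 : d = 0 := by nlinarith
        rw [ha0, hd0] at hdm1
        have hbc : b * c = 1 := by linarith
        have hb1 : b = 1 ∧ c = 1 := by
          rcases Int.mul_eq_one_iff_eq_one_or_neg_one.mp hbc with ⟨h,h'⟩ | ⟨h,h'⟩ <;> omega
        right; omega
      · have hbd : b < d := h1 (by omega)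
        have hd1 : a * d - b * c = 1 := by
          rcases hdet with h | h
          · exact h
          · exfalso; nlinarith
        have hb0 : b = 0 := by nlinarith
        have hc0 : c = 0 := by nlinarith
        rw [hb0, hc0] at hd1
        have had : a * d = 1 := by linarith
        have : a = 1 ∧ d = 1 := by
          rcases Int.mul_eq_one_iff_eq_one_or_neg_one.mp had with ⟨h,h'⟩ | ⟨h,h'⟩ <;> omega
        left; omega

lemma case_prop (a1 a2 b1 b2 : ℤ) (ha1 : 0 ≤ a1) (ha2 : 0 ≤ a2) (hb1 : 0 ≤ b1) (hb2 : 0 ≤ b2)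
    (hM : a1 * b2 = a2 * b1) (hA : ¬(a1 = 0 ∧ a2 = 0)) (hB : ¬(b1 = 0 ∧ b2 = 0)) :
    ∃ p q s1 s2 : ℤ, 0 < p ∧ 0 < q ∧ 0 ≤ s1 ∧ 0 ≤ s2 ∧ ¬(s1 = 0 ∧ s2 = 0) ∧
      a1 = p * s1 ∧ a2 = p * s2 ∧ b1 = q * s1 ∧ b2 = q * s2 := by
  have hgne : Int.gcd a1 a2 ≠ 0 := fun h => hA (Int.gcd_eq_zero_iff.mp h)
  have hgpos : 0 < (Int.gcd a1 a2 : ℤ) := by exact_mod_cast Nat.pos_of_ne_zero hgne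
  set g : ℤ := (Int.gcd a1 a2 : ℤ) with hgdef
  have hs1 : g ∣ a1 := Int.gcd_dvd_left a1 a2
  have hs2 : g ∣ a2 := Int.gcd_dvd_right a1 a2
  set s1 : ℤ := a1 / g with hs1def
  set s2 : ℤ := a2 / g with hs2def
  have ha1' : a1 = g * s1 := (Int.mul_ediv_cancel' hs1).symm
  have ha2' : a2 = g * s2 := (Int.mul_ediv_cancel' hs2).symm
  have hco : Int.gcd s1 s2 = 1 := Int.gcd_div_gcd_div_gcd (Nat.pos_of_ne_zero hgne)
  have hs1n : 0 ≤ s1 := Int.ediv_nonneg ha1 (le_of_lt hgpos)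
  have hs2n : 0 ≤ s2 := Int.ediv_nonneg ha2 (le_of_lt hgpos)
  have hsne : ¬(s1 = 0 ∧ s2 = 0) := by
    rintro ⟨h1, h2⟩
    exact hA ⟨by rw [ha1', h1, mul_zero], by rw [ha2', h2, mul_zero]⟩
  have hM' : s1 * b2 = s2 * b1 := by
    have : g * (s1 * b2) = g * (s2 * b1) := by
      rw [show g * (s1 * b2) = (g * s1) * b2 by ring, ← ha1',
          show g * (s2 * b1) = (g * s2) * b1 by ring, ← ha2']
      exact hM
    exact mul_left_cancel₀ (ne_of_gt hgpos) this
  by_cases hz : s1 = 0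
  · -- s2 = 1, b1 = 0, q = b2
    have hs21 : s2 = 1 := by
      have : Int.gcd 0 s2 = 1 := by rw [← hz]; exact hco
      rw [Int.gcd] at this
      simp at this
      omega
    have hb10 : b1 = 0 := by
      have := hM'
      rw [hz, hs21] at this
      simpa using this.symm
    have hb2pos : 0 < b2 := by
      rcases lt_or_ge 0 b2 with h | h
      · exact h
      · exact absurd ⟨hb10, by omega⟩ hB
    exact ⟨g, b2, s1, s2, hgpos, hb2pos, hs1n, hs2n, hsne, ha1', ha2',
      by rw [hz, mul_zero, hb10], by rw [hs21, mul_one]⟩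
  · -- s1 ≠ 0 hence s1 > 0; s1 ∣ b1
    have hs1pos : 0 < s1 := lt_of_le_of_ne hs1n (Ne.symm hz)
    have hdvd : s1 ∣ b1 := by
      have hcop : IsCoprime s1 s2 := Int.isCoprime_iff_gcd_eq_one.mpr hco
      have : s1 ∣ b1 * s2 := ⟨b2, by linarith [hM']⟩
      exact hcop.dvd_of_dvd_mul_right this
    set q : ℤ := b1 / s1 with hqdef
    have hb1' : b1 = s1 * q := (Int.mul_ediv_cancel' hdvd).symm
    have hb2' : b2 = q * s2 := by
      have : s1 * b2 = s1 * (q * s2) := by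
        rw [hM', hb1']; ring
      exact mul_left_cancel₀ hz this
    have hqn : 0 ≤ q := by
      by_contra hq
      push_neg at hq
      nlinarith [hb1']
    have hqpos : 0 < q := by
      rcases lt_or_ge 0 q with h | h
      · exact h
      · have hq0 : q = 0 := by omega
        exact absurd ⟨by rw [hb1', hq0, mul_zero], by rw [hb2', hq0, zero_mul]⟩ hB
    exact ⟨g, q, s1, s2, hgpos, hqpos, hs1n, hs2n, hsne, ha1', ha2',
      by rw [hb1']; ring, hb2'⟩

def detE (A : Mat) : ℤ :=
  A 0 0 * A 1 1 * A 2 2 - A 0 0 * A 1 2 * A 2 1 - A 0 1 * A 1 0 * A 2 2 +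
    A 0 1 * A 1 2 * A 2 0 + A 0 2 * A 1 0 * A 2 1 - A 0 2 * A 1 1 * A 2 0

def Inv3 (A : Mat) : Prop :=
  (∀ i j, 0 ≤ A i j) ∧ (detE A = 1 ∨ detE A = -1) ∧ A 0 1 * A 1 2 = A 0 2 * A 1 1

def permMat (σ : Equiv.Perm (Fin 3)) : Mat := fun k l => if l = σ k then 1 else 0

lemma update_entries (A : Mat) (i j k l : Fin 3) :
    Function.update A j (A j - A i) k l = if k = j then A j l - A i l else A k l := by
  by_cases hk : k = j
  · subst hk; simp
  · simp [hk]

lemma detE_eq_det (A : Mat) : detE A = (Matrix.of A).det := by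
  rw [Matrix.det_fin_three]; rfl

lemma detE_update (A : Mat) (i j : Fin 3) (hij : i ≠ j) :
    detE (Function.update A j (A j - A i)) = detE A := by
  have h : Matrix.of (Function.update A j (A j - A i))
      = Matrix.updateRow (Matrix.of A) j ((Matrix.of A) j + (-1 : ℤ) • (Matrix.of A) i) := by
    funext k l
    by_cases hk : k = j
    · subst hk
      simp [Matrix.updateRow_self, sub_eq_add_neg]
    · simp [Function.update_of_ne hk, Matrix.updateRow_ne hk]
  rw [detE_eq_det, detE_eq_det, h, Matrix.det_updateRow_add_smul_self _ hij.symm (-1 : ℤ)]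

lemma mat_ext (A B : Mat) (h00 : A 0 0 = B 0 0) (h01 : A 0 1 = B 0 1) (h02 : A 0 2 = B 0 2)
    (h10 : A 1 0 = B 1 0) (h11 : A 1 1 = B 1 1) (h12 : A 1 2 = B 1 2)
    (h20 : A 2 0 = B 2 0) (h21 : A 2 1 = B 2 1) (h22 : A 2 2 = B 2 2) : A = B := by
  funext k l
  fin_cases k <;> fin_cases l <;> assumption

lemma nonneg_update (A : Mat) (i j : Fin 3) (h0 : ∀ k l, 0 ≤ A k l)
    (hle : ∀ l, A i l ≤ A j l) : ∀ k l, 0 ≤ Function.update A j (A j - A i) k l := by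
  intro k l
  rw [update_entries]
  split
  · have := hle l; omega
  · exact h0 k l

lemma unit_factor (x y : ℤ) (h : x * y = 1 ∨ x * y = -1) : x = 1 ∨ x = -1 := by
  have hxu : IsUnit x := by
    rcases h with h | h
    · exact IsUnit.of_mul_eq_one (a := x) y h
    · exact IsUnit.of_mul_eq_one (a := x) (-y) (by linear_combination -h)
  exact Int.isUnit_iff.mp hxu

lemma unit_factor' (x y : ℤ) (hx : 0 ≤ x) (h : x * y = 1 ∨ x * y = -1) :
    x = 1 ∧ (y = 1 ∨ y = -1) := by
  rcases unit_factor x y h with h1 | h1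
  · subst h1
    refine ⟨rfl, ?_⟩
    simpa using h
  · omega

lemma mk_step (A : Mat) (i j : Fin 3) (hij : i ≠ j) (h0 : ∀ k l, 0 ≤ A k l)
    (hdet : detE A = 1 ∨ detE A = -1)
    (hle : ∀ l, A i l ≤ A j l) (hpos : 0 < ∑ l, A i l)
    (hminor : Function.update A j (A j - A i) 0 1 * Function.update A j (A j - A i) 1 2 =
      Function.update A j (A j - A i) 0 2 * Function.update A j (A j - A i) 1 1) :
    ∃ i j : Fin 3, i ≠ j ∧ (∀ l, A i l ≤ A j l) ∧ 0 < ∑ l, A i l ∧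
      Inv3 (Function.update A j (A j - A i)) :=
  ⟨i, j, hij, hle, hpos, nonneg_update A i j h0 hle,
    by rw [detE_update A i j hij]; exact hdet, hminor⟩

def σ201 : Equiv.Perm (Fin 3) := ⟨![2,0,1], ![1,2,0], by decide, by decide⟩

lemma step_exists (A : Mat) (h0 : ∀ i j, 0 ≤ A i j)
    (hdet : detE A = 1 ∨ detE A = -1) (hM : A 0 1 * A 1 2 = A 0 2 * A 1 1)
    (hnp : ¬ ∃ σ : Equiv.Perm (Fin 3), A = permMat σ) :
    ∃ i j : Fin 3, i ≠ j ∧ (∀ l, A i l ≤ A j l) ∧ 0 < ∑ l, A i l ∧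
      Inv3 (Function.update A j (A j - A i)) := by
  have n00 := h0 0 0; have n01 := h0 0 1; have n02 := h0 0 2
  have n10 := h0 1 0; have n11 := h0 1 1; have n12 := h0 1 2
  have n20 := h0 2 0; have n21 := h0 2 1; have n22 := h0 2 2
  by_cases hb : A 1 1 = 0 ∧ A 1 2 = 0
  · -- CASE II : row 1 = (A 1 0, 0, 0)
    obtain ⟨hb1, hb2⟩ := hb
    have hdet' : detE A = A 1 0 * (A 0 2 * A 2 1 - A 0 1 * A 2 2) := by
      simp only [detE]; rw [hb1, hb2]; ring
    rw [hdet'] at hdet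
    obtain ⟨hb0, hX⟩ := unit_factor' _ _ n10 hdet
    by_cases ha0 : 0 < A 0 0
    · -- op (1,0)
      refine mk_step A 1 0 (by decide) h0 ?_ ?_ ?_ ?_
      · rw [hdet']; exact hdet
      · intro l; fin_cases l <;> simp <;> omega
      · simp [Fin.sum_univ_three]; omega
      · simp only [update_entries, Fin.reduceEq, reduceIte]
        rw [hb1, hb2]; ring
    · by_cases hc0 : 0 < A 2 0
      · -- op (1,2)
        refine mk_step A 1 2 (by decide) h0 ?_ ?_ ?_ ?_
        · rw [hdet']; exact hdet
        · intro l; fin_cases l <;> simp <;> omega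
        · simp [Fin.sum_univ_three]; omega
        · simp only [update_entries, Fin.reduceEq, reduceIte]
          exact hM
      · have ha00 : A 0 0 = 0 := by omega
        have hc00 : A 2 0 = 0 := by omega
        have hL : A 0 1 * A 2 2 - A 0 2 * A 2 1 = 1 ∨ A 0 1 * A 2 2 - A 0 2 * A 2 1 = -1 := by
          rcases hX with h | h
          · right; linarith
          · left; linarith
        rcases two_dim (A 0 1) (A 0 2) (A 2 1) (A 2 2) n01 n02 n21 n22 hL with
          (⟨e1, e2, e3, e4⟩ | ⟨e1, e2, e3, e4⟩) | (⟨c1, c2, c3⟩ | ⟨c1, c2, c3⟩)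
        · refine absurd ⟨Equiv.swap 0 1, mat_ext _ _ ?_ ?_ ?_ ?_ ?_ ?_ ?_ ?_ ?_⟩ hnp <;>
            first
              | (rw [ha00]; decide) | (rw [hc00]; decide) | (rw [hb0]; decide)
              | (rw [hb1]; decide) | (rw [hb2]; decide) | (rw [e1]; decide)
              | (rw [e2]; decide) | (rw [e3]; decide) | (rw [e4]; decide)
        · refine absurd ⟨σ201, mat_ext _ _ ?_ ?_ ?_ ?_ ?_ ?_ ?_ ?_ ?_⟩ hnp <;>
            first
              | (rw [ha00]; decide) | (rw [hc00]; decide) | (rw [hb0]; decide)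
              | (rw [hb1]; decide) | (rw [hb2]; decide) | (rw [e1]; decide)
              | (rw [e2]; decide) | (rw [e3]; decide) | (rw [e4]; decide)
        · -- row2 ≤ row0 componentwise, op (2,0)
          refine mk_step A 2 0 (by decide) h0 ?_ ?_ ?_ ?_
          · rw [hdet']; exact hdet
          · intro l; fin_cases l <;> simp <;> omega
          · simp [Fin.sum_univ_three]; omega
          · simp only [update_entries, Fin.reduceEq, reduceIte]
            rw [hb1, hb2]; ring
        · -- row0 ≤ row2, op (0,2)
          refine mk_step A 0 2 (by decide) h0 ?_ ?_ ?_ ?_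
          · rw [hdet']; exact hdet
          · intro l; fin_cases l <;> simp <;> omega
          · simp [Fin.sum_univ_three]; omega
          · simp only [update_entries]
            norm_num
            exact hM
  · by_cases ha : A 0 1 = 0 ∧ A 0 2 = 0
    · -- CASE III : row 0 = (A 0 0, 0, 0)
      obtain ⟨ha1, ha2⟩ := ha
      have hdet' : detE A = A 0 0 * (A 1 1 * A 2 2 - A 1 2 * A 2 1) := by
        simp only [detE]; rw [ha1, ha2]; ring
      rw [hdet'] at hdet
      obtain ⟨ha0, hY⟩ := unit_factor' _ _ n00 hdet
      by_cases hb0 : 0 < A 1 0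
      · refine mk_step A 0 1 (by decide) h0 ?_ ?_ ?_ ?_
        · rw [hdet']; exact hdet
        · intro l; fin_cases l <;> simp <;> omega
        · simp [Fin.sum_univ_three]; omega
        · simp only [update_entries]
          norm_num
          rw [ha1, ha2]; ring
      · by_cases hc0 : 0 < A 2 0
        · refine mk_step A 0 2 (by decide) h0 ?_ ?_ ?_ ?_
          · rw [hdet']; exact hdet
          · intro l; fin_cases l <;> simp <;> omega
          · simp [Fin.sum_univ_three]; omega
          · simp only [update_entries]
            norm_num
            exact hM
        · have hb00 : A 1 0 = 0 := by omega
          have hc00 : A 2 0 = 0 := by omega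
          rcases two_dim (A 1 1) (A 1 2) (A 2 1) (A 2 2) n11 n12 n21 n22 hY with
            (⟨e1, e2, e3, e4⟩ | ⟨e1, e2, e3, e4⟩) | (⟨c1, c2, c3⟩ | ⟨c1, c2, c3⟩)
          · refine absurd ⟨Equiv.refl _, mat_ext _ _ ?_ ?_ ?_ ?_ ?_ ?_ ?_ ?_ ?_⟩ hnp <;>
              first
                | (rw [ha0]; decide) | (rw [ha1]; decide) | (rw [ha2]; decide)
                | (rw [hb00]; decide) | (rw [hc00]; decide) | (rw [e1]; decide)
                | (rw [e2]; decide) | (rw [e3]; decide) | (rw [e4]; decide)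
          · refine absurd ⟨Equiv.swap 1 2, mat_ext _ _ ?_ ?_ ?_ ?_ ?_ ?_ ?_ ?_ ?_⟩ hnp <;>
              first
                | (rw [ha0]; decide) | (rw [ha1]; decide) | (rw [ha2]; decide)
                | (rw [hb00]; decide) | (rw [hc00]; decide) | (rw [e1]; decide)
                | (rw [e2]; decide) | (rw [e3]; decide) | (rw [e4]; decide)
          · refine mk_step A 2 1 (by decide) h0 ?_ ?_ ?_ ?_
            · rw [hdet']; exact hdet
            · intro l; fin_cases l <;> simp <;> omega
            · simp [Fin.sum_univ_three]; omega
            · simp only [update_entries, Fin.reduceEq, reduceIte]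
              rw [ha1, ha2]; ring
          · refine mk_step A 1 2 (by decide) h0 ?_ ?_ ?_ ?_
            · rw [hdet']; exact hdet
            · intro l; fin_cases l <;> simp <;> omega
            · simp [Fin.sum_univ_three]; omega
            · simp only [update_entries, Fin.reduceEq, reduceIte]
              exact hM
    · -- CASE IV
      obtain ⟨p, q, s1, s2, hp, hq, hs1n, hs2n, hsne, e1, e2, e3, e4⟩ :=
        case_prop (A 0 1) (A 0 2) (A 1 1) (A 1 2) n01 n02 n11 n12 hM ha hb
      have hspos : 0 < s1 ∨ 0 < s2 := by omega
      have hfact : detE A = (A 0 0 * q - A 1 0 * p) * (s1 * A 2 2 - s2 * A 2 1) := by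
        simp only [detE]; rw [e1, e2, e3, e4]; ring
      rw [hfact] at hdet
      have hK := unit_factor _ _ hdet
      have hK' : A 0 0 * q - p * A 1 0 = 1 ∨ A 0 0 * q - p * A 1 0 = -1 := by
        rcases hK with h | h
        · left; linarith
        · right; linarith
      rcases two_dim (A 0 0) p (A 1 0) q n00 (le_of_lt hp) n10 (le_of_lt hq) hK' with
        (⟨f1, f2, f3, f4⟩ | ⟨f1, f2, f3, f4⟩) | (⟨c1, c2, c3⟩ | ⟨c1, c2, c3⟩)
      · omega
      · omega
      · -- row1 ≤ row0, op (1,0)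
        refine mk_step A 1 0 (by decide) h0 ?_ ?_ ?_ ?_
        · rw [hfact]; exact hdet
        · intro l
          fin_cases l <;> simp
          · exact c1
          · rw [e1, e3]; exact mul_le_mul_of_nonneg_right c2 hs1n
          · rw [e2, e4]; exact mul_le_mul_of_nonneg_right c2 hs2n
        · have : 0 < A 1 1 ∨ 0 < A 1 2 ∨ 0 < A 1 0 := by
            rcases c3 with h | h
            · right; right; exact h
            · rcases hspos with hs | hs
              · left; rw [e3]; exact mul_pos h hs
              · right; left; rw [e4]; exact mul_pos h hs
          simp [Fin.sum_univ_three]; omega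
        · simp only [update_entries, Fin.reduceEq, reduceIte]
          linear_combination hM
      · -- row0 ≤ row1, op (0,1)
        refine mk_step A 0 1 (by decide) h0 ?_ ?_ ?_ ?_
        · rw [hfact]; exact hdet
        · intro l
          fin_cases l <;> simp
          · exact c1
          · rw [e1, e3]; exact mul_le_mul_of_nonneg_right c2 hs1n
          · rw [e2, e4]; exact mul_le_mul_of_nonneg_right c2 hs2n
        · have : 0 < A 0 1 ∨ 0 < A 0 2 := by
            rcases hspos with hs | hs
            · left; rw [e1]; exact mul_pos hp hs
            · right; rw [e2]; exact mul_pos hp hs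
          simp [Fin.sum_univ_three]; omega
        · simp only [update_entries, Fin.reduceEq, reduceIte]
          linear_combination hM


lemma sum_update (A : Mat) (i j : Fin 3) :
    (∑ k, ∑ l, Function.update A j (A j - A i) k l)
      = (∑ k, ∑ l, A k l) - ∑ l, A i l := by
  fin_cases j <;> simp [Fin.sum_univ_three, update_entries] <;> ring

lemma reduce : ∀ (n : ℕ) (A : Mat), Inv3 A → (∑ k, ∑ l, A k l) ≤ (n : ℤ) →
    ∃ σ : Equiv.Perm (Fin 3), Relation.ReflTransGen UStep (permMat σ) A := by
  intro n
  induction n with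
  | zero =>
    intro A hA hsum
    exfalso
    obtain ⟨h0, hdet, -⟩ := hA
    have n00 := h0 0 0; have n01 := h0 0 1; have n02 := h0 0 2
    have n10 := h0 1 0; have n11 := h0 1 1; have n12 := h0 1 2
    have n20 := h0 2 0; have n21 := h0 2 1; have n22 := h0 2 2
    have hs : A 0 0 + A 0 1 + A 0 2 + (A 1 0 + A 1 1 + A 1 2) + (A 2 0 + A 2 1 + A 2 2) ≤ 0 := by
      have := hsum; simp [Fin.sum_univ_three] at this; linarith
    have h00 : A 0 0 = 0 := by omega
    have h01 : A 0 1 = 0 := by omega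
    have h02 : A 0 2 = 0 := by omega
    have h11 : A 1 1 = 0 := by omega
    have h12 : A 1 2 = 0 := by omega
    have h10 : A 1 0 = 0 := by omega
    have hz : detE A = 0 := by
      simp only [detE]; rw [h00, h01, h02, h10, h11, h12]; ring
    omega
  | succ n ih =>
    intro A hA hsum
    by_cases hp : ∃ σ : Equiv.Perm (Fin 3), A = permMat σ
    · obtain ⟨σ, rfl⟩ := hp
      exact ⟨σ, Relation.ReflTransGen.refl⟩
    · obtain ⟨i, j, hij, hle, hpos, hA'⟩ := step_exists A hA.1 hA.2.1 hA.2.2 hp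
      have hsum' : (∑ k, ∑ l, Function.update A j (A j - A i) k l) ≤ (n : ℤ) := by
        rw [sum_update]
        push_cast at hsum ⊢
        omega
      obtain ⟨σ, hchain⟩ := ih _ hA' hsum'
      refine ⟨σ, hchain.tail ⟨i, j, hij, ?_⟩⟩
      funext k
      by_cases hk : k = j
      · subst hk
        rw [Function.update_self]
        funext l
        rw [Pi.add_apply, Function.update_of_ne hij, Function.update_self, Pi.sub_apply]
        ring
      · rw [Function.update_of_ne hk, Function.update_of_ne hk]

lemma ustep_perm (ρ : Equiv.Perm (Fin 3)) {X Y : Mat} (h : UStep X Y) :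
    UStep (fun k => X (ρ k)) (fun k => Y (ρ k)) := by
  obtain ⟨i, j, hij, rfl⟩ := h
  refine ⟨ρ.symm i, ρ.symm j, fun hc => hij (by simpa using congrArg ρ hc), ?_⟩
  funext k
  by_cases hk : k = ρ.symm j
  · subst hk
    rw [Equiv.apply_symm_apply]
    simp
  · have hkj : ρ k ≠ j := fun hc => hk (by rw [← hc]; simp)
    rw [Function.update_of_ne hk, Function.update_of_ne hkj]

def app (A B : Mat) : Mat := fun k m => ∑ l, A k l * B l m

lemma ustep_app {A B : Mat} (W : Mat) (h : UStep A B) : UStep (app A W) (app B W) := by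
  obtain ⟨i, j, hij, rfl⟩ := h
  refine ⟨i, j, hij, ?_⟩
  funext k m
  by_cases hk : k = j
  · subst hk
    rw [Function.update_self]
    simp only [app, Function.update_self, Pi.add_apply, add_mul, Finset.sum_add_distrib]
  · rw [show Function.update (app A W) j (app A W i + app A W j) k = app A W k from
      Function.update_of_ne hk _ _]
    simp only [app]
    congr 1
    funext l
    rw [Function.update_of_ne hk]

lemma permMat_symm_rows (σ : Equiv.Perm (Fin 3)) :
    (fun k => permMat σ (σ.symm k)) = permMat (Equiv.refl (Fin 3)) := by
  funext k l
  simp [permMat]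
  rfl

lemma app_id (W : Mat) : app (permMat (Equiv.refl (Fin 3))) W = W := by
  funext k m
  show ∑ l, (if l = k then (1:ℤ) else 0) * W l m = W k m
  simp [app, permMat, ite_mul, zero_mul, one_mul]

lemma main_chain (A W : Mat) (hA : Inv3 A) :
    ∃ σ : Equiv.Perm (Fin 3),
      Relation.ReflTransGen UStep W (app (fun k => A (σ.symm k)) W) := by
  obtain ⟨σ, hchain⟩ := reduce (∑ k, ∑ l, A k l).toNat A hA (Int.self_le_toNat _)
  refine ⟨σ, ?_⟩
  have h1 := Relation.ReflTransGen.lift (fun X : Mat => fun k => X (σ.symm k))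
    (fun a b h => ustep_perm σ.symm h) _ _ hchain
  have h2 := Relation.ReflTransGen.lift (fun X : Mat => app X W)
    (fun a b h => ustep_app W h) _ _ h1
  beta_reduce at h2
  simp only [Function.onFun] at h2
  rwa [permMat_symm_rows, app_id] at h2
lemma realCone_perm (u : Mat) (ρ : Equiv.Perm (Fin 3)) :
    realCone (fun k => u (ρ k)) = realCone u := by
  ext x
  constructor
  · rintro ⟨c, hc, rfl⟩
    refine ⟨fun i => c (ρ.symm i), fun i => hc _, ?_⟩
    exact Fintype.sum_equiv ρ _ _ (fun x => by simp)
  · rintro ⟨c, hc, rfl⟩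
    refine ⟨fun i => c (ρ i), fun i => hc _, ?_⟩
    exact (Fintype.sum_equiv ρ _ _ (fun x => rfl)).symm

lemma sum_smul_toReal_eq (w : Mat) (c : Fin 3 → ℝ) :
    (∑ l, c l • toReal (w l)) = Matrix.vecMul c ((Matrix.of w).map (Int.castRingHom ℝ)) := by
  funext j
  simp [Matrix.vecMul, dotProduct, toReal, Finset.sum_apply, Matrix.map_apply,
    Matrix.of_apply]

lemma coeff_unique (w : Mat) (hw : IsUnit (Matrix.of w).det) {c c' : Fin 3 → ℝ}
    (h : (∑ l, c l • toReal (w l)) = ∑ l, c' l • toReal (w l)) : c = c' := by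
  set Wr := (Matrix.of w).map (Int.castRingHom ℝ) with hWr
  have hdet : IsUnit Wr.det := by
    have h := hw.map (Int.castRingHom ℝ)
    rw [RingHom.map_det] at h
    exact h
  have h' : Matrix.vecMul c Wr = Matrix.vecMul c' Wr := by
    rw [← sum_smul_toReal_eq, ← sum_smul_toReal_eq]; exact h
  have h2 := congrArg (fun x => Matrix.vecMul x Wr⁻¹) h'
  simpa [Matrix.vecMul_vecMul, Matrix.mul_nonsing_inv _ hdet, Matrix.vecMul_one] using h2

lemma exists_A (w u : Mat) (hw : IsUnit (Matrix.of w).det) (hu : IsUnit (Matrix.of u).det)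
    (hsub : realCone u ⊆ realCone w)
    (hdep : ¬ LinearIndependent ℝ ![toReal (w 0), toReal (u 0), toReal (u 1)]) :
    ∃ A : Mat, Inv3 A ∧ u = app A w := by
  set W : Matrix (Fin 3) (Fin 3) ℤ := Matrix.of w with hWdef
  set A : Matrix (Fin 3) (Fin 3) ℤ := Matrix.of u * W⁻¹ with hAdef
  have hAW : A * W = Matrix.of u := by
    rw [hAdef, Matrix.mul_assoc, Matrix.nonsing_inv_mul W hw, Matrix.mul_one]
  have happ : u = app (fun k l => A k l) w := by
    funext k m
    have h1 := congrFun (congrFun hAW k) m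
    rw [Matrix.mul_apply] at h1
    exact h1.symm
  -- nonnegativity of A
  have hnn : ∀ k l, 0 ≤ A k l := by
    intro k l
    have hkmem : toReal (u k) ∈ realCone u := by
      refine ⟨fun i => if i = k then 1 else 0, fun i => by dsimp only; split <;> norm_num, ?_⟩
      simp [ite_smul]
    obtain ⟨c, hc, hceq⟩ := hsub hkmem
    have h2 : (∑ l, ((A k l : ℝ)) • toReal (w l)) = ∑ l, c l • toReal (w l) := by
      funext j
      have h3 := congrFun (congrFun happ k) j
      simp only [app] at h3
      have h4 := congrFun hceq j
      simp only [Finset.sum_apply, Pi.smul_apply, toReal, smul_eq_mul] at h4 ⊢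
      rw [← h4]
      push_cast [h3]
      rfl
    have h5 := coeff_unique w hw h2
    have h6 : (A k l : ℝ) = c l := congrFun h5 l
    have := hc l
    rw [← h6] at this
    exact_mod_cast this
  -- determinant of A is a unit
  have hdetA : IsUnit (Matrix.det A) := by
    have : IsUnit (A.det * W.det) := by
      rw [← Matrix.det_mul, hAW]; exact hu
    exact isUnit_of_mul_isUnit_left this
  have hdetE : detE (fun k l => A k l) = 1 ∨ detE (fun k l => A k l) = -1 := by
    rw [detE_eq_det]
    exact Int.isUnit_iff.mp hdetA
  -- the minor condition from hdep
  obtain ⟨g, hg, i0, hi0⟩ := Fintype.not_linearIndependent_iff.mp hdep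
  set Mr : Matrix (Fin 3) (Fin 3) ℝ := Matrix.of ![toReal (w 0), toReal (u 0), toReal (u 1)]
    with hMrdef
  have hvm : Matrix.vecMul g Mr = 0 := by
    funext j
    have h7 := congrFun hg j
    simp only [Finset.sum_apply, Pi.smul_apply, Pi.zero_apply, smul_eq_mul] at h7
    simpa [Matrix.vecMul, dotProduct, hMrdef] using h7
  have hgne : g ≠ 0 := fun h => hi0 (by rw [h]; rfl)
  have hdet0 : Mr.det = 0 := Matrix.exists_vecMul_eq_zero_iff.mp ⟨g, hgne, hvm⟩
  set N : Matrix (Fin 3) (Fin 3) ℤ := Matrix.of ![w 0, u 0, u 1] with hNdef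
  have hMrN : Mr = N.map (Int.castRingHom ℝ) := by
    funext i j
    fin_cases i <;> simp [hMrdef, hNdef, toReal, Matrix.map_apply]
  have hN0 : N.det = 0 := by
    have h8 := RingHom.map_det (Int.castRingHom ℝ) N
    have hNd : ((Int.castRingHom ℝ).mapMatrix N).det = 0 := by
      rw [show (Int.castRingHom ℝ).mapMatrix N = N.map (Int.castRingHom ℝ) from rfl, ← hMrN]
      exact hdet0
    have h9 : ((N.det : ℤ) : ℝ) = 0 := by simpa using h8.trans hNd
    exact_mod_cast h9
  set C : Matrix (Fin 3) (Fin 3) ℤ :=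
    Matrix.of ![(fun l => if l = 0 then (1:ℤ) else 0), fun l => A 0 l, fun l => A 1 l] with hCdef
  have hNC : N = C * W := by
    funext i j
    rw [Matrix.mul_apply]
    fin_cases i
    · simp [hNdef, hCdef, ite_mul, hWdef]
    · have h9 := congrFun (congrFun happ 0) j
      simp only [app] at h9
      simpa [hNdef, hCdef, hWdef] using h9
    · have h9 := congrFun (congrFun happ 1) j
      simp only [app] at h9
      simpa [hNdef, hCdef, hWdef] using h9
  have hCdet0 : C.det = 0 := by
    have h10 : C.det * W.det = 0 := by rw [← Matrix.det_mul, ← hNC, hN0]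
    rcases mul_eq_zero.mp h10 with h | h
    · exact h
    · exact absurd h (IsUnit.ne_zero hw)
  have hminor : A 0 1 * A 1 2 = A 0 2 * A 1 1 := by
    have h11 := Matrix.det_fin_three C
    rw [hCdet0] at h11
    simp [hCdef] at h11
    linarith
  exact ⟨fun k l => A k l, ⟨hnn, hdetE, hminor⟩, happ⟩

end Stmt18Aux

/-- Key step of Lemma 3 (n = 3): if `w 0, u 0, u 1` are linearly dependent, then
`τ` is directly factorizable: it is obtained from `σ` by star subdivisions along `v`. -/
theorem stmt18 (w u : Fin 3 → Fin 3 → ℤ) (hw : IsZBasis w) (hu : IsZBasis u)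
    (hsub : realCone u ⊆ realCone w)
    (hdep : ¬ LinearIndependent ℝ ![toReal (w 0), toReal (u 0), toReal (u 1)])
    (v : Fin 3 → ℝ) (hv : LinearIndependent ℚ v) (hvτ : v ∈ realCone u) :
    ∃ u' : Fin 3 → Fin 3 → ℤ,
      Relation.ReflTransGen (StarStep v) w u' ∧ realCone u' = realCone u := by
  obtain ⟨A, hInv, happ⟩ := Stmt18Aux.exists_A w u hw hu hsub hdep
  obtain ⟨σ, hchain⟩ := Stmt18Aux.main_chain A w hInv
  have hveq : Stmt18Aux.app (fun k => A (σ.symm k)) w = fun k => u (σ.symm k) := by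
    funext k m
    exact (congrFun (congrFun happ (σ.symm k)) m).symm
  rw [hveq] at hchain
  refine ⟨fun k => u (σ.symm k), ?_, Stmt18Aux.realCone_perm u σ.symm⟩
  exact Stmt18Aux.star_of_chain hchain
    (by rw [Stmt18Aux.realCone_perm u σ.symm]; exact hvτ)
end

section
/- Let R be a regular local ring with regular system of parameters x_1,...,x_n, and let u_1,...,u_n be the standard basis of Z^n recording exponents. A monoidal transform R → R' = (R[x_1/x_i, x_2/x_i])_p with center (x_1,x_2) along a valuation ν (with ν(x_1),...,ν(x_n) rationally independent positive reals) replaces the exponent vectors by u_1,...,u_n with u_2 replaced by u_1+u_2 or u_1 replaced by u_1+u_2, according to whether ν(x_1) < ν(x_2) or ν(x_2) < ν(x_1); i.e., the monomial valuation data transforms exactly as the star subdivision of the cone ⟨u_1,...,u_n⟩ at u_1+u_2 along the vector v = Σ ν(x_i) u_i. -/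
open Function

lemma toReal_add {n : ℕ} (a c : Fin n → ℤ) : toReal (a + c) = toReal a + toReal c := by
  funext k
  simp [toReal]

/-- The identity `b_j (w_i + w_j) + (b_i - b_j) w_i = b_i w_i + b_j w_j` behind a star step. -/
lemma sum_update_smul_update_add {ι R M : Type*} [Fintype ι] [DecidableEq ι] [CommRing R]
    [AddCommGroup M] [Module R M] (b : ι → R) (w : ι → M) {i j : ι} (hij : i ≠ j) :
    ∑ k, update b i (b i - b j) k • update w j (w i + w j) k = ∑ k, b k • w k := by
  have hb : update b i (b i - b j) = b - Pi.single i (b j) := by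
    rw [update_eq_iff]
    exact ⟨by simp, fun k hk => by simp [hk]⟩
  have hw : update w j (w i + w j) = w + Pi.single j (w i) := by
    rw [update_eq_iff]
    exact ⟨by simp [add_comm], fun k hk => by simp [hk]⟩
  simp [hb, hw, sub_smul, smul_add, Finset.sum_add_distrib, Finset.sum_sub_distrib,
    Pi.single_apply, hij.symm]

lemma update_sub_nonneg {ι : Type*} [DecidableEq ι] {b : ι → ℝ} (hb : ∀ k, 0 ≤ b k) {i j : ι}
    (hle : b j ≤ b i) (k : ι) : 0 ≤ update b i (b i - b j) k := by
  rcases eq_or_ne k i with rfl | hk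
  · simpa using hle
  · simpa [hk] using hb k

theorem starStep_update_of_le {n : ℕ} (u : Fin n → Fin n → ℤ) {b : Fin n → ℝ}
    (hb : ∀ k, 0 ≤ b k) {i j : Fin n} (hij : i ≠ j) (hle : b j ≤ b i) {v : Fin n → ℝ}
    (hv : v = ∑ k, b k • toReal (u k)) :
    StarStep v u (update u j (u i + u j)) ∧
      v = ∑ k, update b i (b i - b j) k • toReal (update u j (u i + u j) k) := by
  have hv' : v = ∑ k, update b i (b i - b j) k • toReal (update u j (u i + u j) k) := by
    simp_rw [apply_update (fun _ => toReal), toReal_add]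
    rw [sum_update_smul_update_add b (fun k => toReal (u k)) hij, hv]
  exact ⟨⟨i, j, hij, rfl, _, update_sub_nonneg hb hle, hv'⟩, hv'⟩

theorem stmt19_general {n : ℕ} (u : Fin (n+2) → Fin (n+2) → ℤ)
    (b : Fin (n+2) → ℝ) (hb : ∀ i, 0 < b i)
    (v : Fin (n+2) → ℝ) (hv : v = ∑ i, b i • toReal (u i)) :
    (b 0 < b 1 →
      StarStep v u (Function.update u 0 (u 0 + u 1)) ∧
      v = ∑ i, Function.update b 1 (b 1 - b 0) i • toReal (Function.update u 0 (u 0 + u 1) i)) ∧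
    (b 1 < b 0 →
      StarStep v u (Function.update u 1 (u 0 + u 1)) ∧
      v = ∑ i, Function.update b 0 (b 0 - b 1) i • toReal (Function.update u 1 (u 0 + u 1) i)) := by
  have hb' : ∀ i, 0 ≤ b i := fun i => (hb i).le
  refine ⟨fun hlt => ?_, fun hlt => starStep_update_of_le u hb' Fin.zero_ne_one hlt.le hv⟩
  rw [add_comm (u 0)]
  exact starStep_update_of_le u hb' Fin.zero_ne_one.symm hlt.le hv

/-- Monoidal transforms with center `(x 0, x 1)` along a valuation transform the
valuation data `(b i) = (ν (x i))` exactly as the star subdivision of the cone on the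
exponent basis `u` at `u 0 + u 1` along `v = Σ b i • u i`: if `b 0 < b 1` the
generator `u 0` is replaced by `u 0 + u 1` and `b 1` by `b 1 - b 0`, and
symmetrically if `b 1 < b 0`. -/
theorem stmt19 {n : ℕ} (u : Fin (n+2) → Fin (n+2) → ℤ) (hu : IsZBasis u)
    (b : Fin (n+2) → ℝ) (hb : ∀ i, 0 < b i) (hind : LinearIndependent ℚ b)
    (v : Fin (n+2) → ℝ) (hv : v = ∑ i, b i • toReal (u i)) :
    (b 0 < b 1 →
      StarStep v u (Function.update u 0 (u 0 + u 1)) ∧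
      v = ∑ i, Function.update b 1 (b 1 - b 0) i • toReal (Function.update u 0 (u 0 + u 1) i)) ∧
    (b 1 < b 0 →
      StarStep v u (Function.update u 1 (u 0 + u 1)) ∧
      v = ∑ i, Function.update b 0 (b 0 - b 1) i • toReal (Function.update u 1 (u 0 + u 1) i)) :=
  stmt19_general u b hb v hv
end
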